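/- Let (X,d) be an unbounded metric space and let p ∈ X. Then the set Sp(X) = {d(x,p) : x ∈ X} is nonporous at infinity (p⁺(Sp(X),∞) = 0) if and only if for any two scaling sequences r̃₁ and r̃₂ the equality {d̃_{r̃₁}(x̃) : x̃ ∈ Seq(X,r̃₁)} = {d̃_{r̃₂}(x̃) : x̃ ∈ Seq(X,r̃₂)} holds (this set is the distance set Sp of the glued pretangent space Ω^X_{∞,r̃ᵢ} measured from its distinguished point ν₀). -/
import Mathlib


open Filter Topology

/-- Two sequences of points of `X` are mutually stable with respect to the scaling
sequence `r` if the finite limit `lim dist (x n) (y n) / r n` exists. -/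
def MutStable {X : Type*} [MetricSpace X] (r : ℕ → ℝ) (x y : ℕ → X) : Prop :=
  ∃ l : ℝ, Tendsto (fun n => dist (x n) (y n) / r n) atTop (𝓝 l)

/-- `Seq(X, r̃)`: the set of sequences `x` of points of `X` such that the finite limit
`d̃_r̃(x) = lim dist (x n) p / r n` exists. -/
def SeqSet {X : Type*} [MetricSpace X] (p : X) (r : ℕ → ℝ) : Set (ℕ → X) :=
  {x | ∃ l : ℝ, Tendsto (fun n => dist (x n) p / r n) atTop (𝓝 l)}

/-- `X̃⁰_{∞,r̃}`: the set of sequences `z` of points of `X` with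
`lim dist (z n) p / r n = 0`. -/
def NullSeq {X : Type*} [MetricSpace X] (p : X) (r : ℕ → ℝ) : Set (ℕ → X) :=
  {z | Tendsto (fun n => dist (z n) p / r n) atTop (𝓝 0)}

/-- A set `F ⊆ Seq(X, r̃)` is self-stable if any two of its elements are mutually
stable. -/
def SelfStable {X : Type*} [MetricSpace X] (p : X) (r : ℕ → ℝ) (F : Set (ℕ → X)) : Prop :=
  F ⊆ SeqSet p r ∧ ∀ x ∈ F, ∀ y ∈ F, MutStable r x y

/-- A maximal self-stable subset of `Seq(X, r̃)`. -/
def MaxSelfStable {X : Type*} [MetricSpace X] (p : X) (r : ℕ → ℝ) (F : Set (ℕ → X)) : Prop :=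
  SelfStable p r F ∧ ∀ G, SelfStable p r G → F ⊆ G → F = G

/-- `l(∞, h, E)`: the length of the longest open interval contained in `[0, h] \ E`. -/
noncomputable def gapLen (E : Set ℝ) (h : ℝ) : ℝ :=
  sSup {L : ℝ | ∃ a b : ℝ, 0 ≤ a ∧ a ≤ b ∧ b ≤ h ∧ Set.Ioo a b ∩ E = ∅ ∧ L = b - a}

/-- The porosity of `E ⊆ [0, ∞)` at infinity: `p⁺(E, ∞) = limsup_{h → ∞} l(∞, h, E) / h`. -/
noncomputable def porosityAtInfty (E : Set ℝ) : ℝ :=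
  Filter.limsup (fun h => gapLen E h / h) Filter.atTop



lemma zero_mem_gapSet {E : Set ℝ} {h : ℝ} (hh : 0 ≤ h) :
    (0:ℝ) ∈ {L : ℝ | ∃ a b : ℝ, 0 ≤ a ∧ a ≤ b ∧ b ≤ h ∧ Set.Ioo a b ∩ E = ∅ ∧ L = b - a} :=
  ⟨0, 0, le_rfl, le_rfl, hh, by simp, by ring⟩

lemma bddAbove_gapSet (E : Set ℝ) (h : ℝ) :
    BddAbove {L : ℝ | ∃ a b : ℝ, 0 ≤ a ∧ a ≤ b ∧ b ≤ h ∧ Set.Ioo a b ∩ E = ∅ ∧ L = b - a} := by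
  refine ⟨h, fun L hL => ?_⟩
  obtain ⟨a, b, ha, hab, hbh, -, rfl⟩ := hL
  linarith


lemma gapLen_nonneg {E : Set ℝ} {h : ℝ} (hh : 0 ≤ h) : 0 ≤ gapLen E h :=
  le_csSup (bddAbove_gapSet E h) (zero_mem_gapSet hh)

lemma gapLen_le {E : Set ℝ} {h : ℝ} (hh : 0 ≤ h) : gapLen E h ≤ h := by
  refine csSup_le ⟨0, zero_mem_gapSet hh⟩ (fun L hL => ?_)
  obtain ⟨a, b, ha, hab, hbh, -, rfl⟩ := hL
  linarith

lemma le_gapLen {E : Set ℝ} {h a b : ℝ} (ha : 0 ≤ a) (hab : a ≤ b) (hbh : b ≤ h)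
    (hgap : Set.Ioo a b ∩ E = ∅) : b - a ≤ gapLen E h :=
  le_csSup (bddAbove_gapSet E h) ⟨a, b, ha, hab, hbh, hgap, rfl⟩

lemma gapLen_div_bdd (E : Set ℝ) :
    IsBoundedUnder (· ≤ ·) (atTop : Filter ℝ) (fun h => gapLen E h / h) := by
  refine isBoundedUnder_of_eventually_le (a := 1) ?_
  filter_upwards [eventually_ge_atTop (1:ℝ)] with h hh
  have h0 : (0:ℝ) < h := by linarith
  rw [div_le_one h0]
  exact gapLen_le h0.le

lemma exists_near {S : Set ℝ} {t ε : ℝ} (ht : 0 < t) (hε : 0 < ε) (hε2 : ε ≤ 1/2)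
    (hgap : gapLen S (2*t) < ε * (2*t)) : ∃ s ∈ S, |s - t| < 2*ε*t := by
  by_contra hcon
  push_neg at hcon
  have hεt : 0 < ε * t := mul_pos hε ht
  have hempty : Set.Ioo (t - 2*ε*t) (t + 2*ε*t) ∩ S = ∅ := by
    ext s
    simp only [Set.mem_inter_iff, Set.mem_Ioo, Set.mem_empty_iff_false, iff_false, not_and]
    rintro ⟨h1, h2⟩ hs
    have h3 : |s - t| < 2*ε*t := abs_lt.mpr ⟨by linarith, by linarith⟩
    have h4 := hcon s hs
    linarith
  have hle : (t + 2*ε*t) - (t - 2*ε*t) ≤ gapLen S (2*t) := by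
    refine le_gapLen ?_ (by linarith) (by nlinarith) hempty
    nlinarith
  nlinarith


lemma approx_tendsto {X : Type*} [MetricSpace X] (p : X)
    (hpor : porosityAtInfty {t : ℝ | ∃ x : X, dist x p = t} = 0)
    {l : ℝ} (hl : 0 < l) {r : ℕ → ℝ} (hr : ∀ n, 0 < r n) (hrt : Tendsto r atTop atTop) :
    ∃ x : ℕ → X, Tendsto (fun n => dist (x n) p / r n) atTop (𝓝 l) := by
  set S := {t : ℝ | ∃ x : X, dist x p = t} with hSdef
  have hSne : S.Nonempty := ⟨dist p p, p, rfl⟩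
  have hpt : ∀ n : ℕ, ∃ x : X,
      |dist x p - l * r n| < Metric.infDist (l * r n) S + 1/(n+1) := by
    intro n
    have h1 : Metric.infDist (l * r n) S < Metric.infDist (l * r n) S + 1/(n+1) :=
      lt_add_of_pos_right _ (by positivity)
    obtain ⟨s, hsS, hds⟩ := (Metric.infDist_lt_iff hSne).mp h1
    obtain ⟨x, hx⟩ := hsS
    refine ⟨x, ?_⟩
    rw [Real.dist_eq, abs_sub_comm] at hds
    rwa [hx]
  choose x hx using hpt
  -- infDist / r tends to zero
  have hinf : Tendsto (fun n => Metric.infDist (l * r n) S / r n) atTop (𝓝 0) := by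
    rw [NormedAddCommGroup.tendsto_nhds_zero]
    intro ε hε
    set ε' := min (ε / (4 * l)) (1/2) with hε'def
    have hε'pos : 0 < ε' := lt_min (by positivity) (by norm_num)
    have hε'le : ε' ≤ 1/2 := min_le_right _ _
    have h4 : ε' * (4 * l) ≤ ε :=
      (le_div_iff₀ (by positivity)).mp (min_le_left _ _)
    have hev : ∀ᶠ h in (atTop : Filter ℝ), gapLen S h / h < ε' := by
      refine eventually_lt_of_limsup_lt ?_ (gapLen_div_bdd S)
      have : Filter.limsup (fun h => gapLen S h / h) atTop = 0 := hpor
      rw [this]; exact hε'pos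
    have hev2 : ∀ᶠ h in (atTop : Filter ℝ), 0 < h ∧ gapLen S h / h < ε' :=
      (eventually_gt_atTop 0).and hev
    have htt : Tendsto (fun n => 2 * (l * r n)) atTop atTop := by
      have := hrt.const_mul_atTop (show (0:ℝ) < 2 * l by positivity)
      simpa [mul_assoc] using this
    filter_upwards [htt.eventually hev2] with n hn
    obtain ⟨hpos, hlt⟩ := hn
    have htpos : 0 < l * r n := mul_pos hl (hr n)
    have hgap : gapLen S (2 * (l * r n)) < ε' * (2 * (l * r n)) :=
      (div_lt_iff₀ hpos).mp hlt
    obtain ⟨s, hsS, hnear⟩ := exists_near htpos hε'pos hε'le hgap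
    have hinf_le : Metric.infDist (l * r n) S ≤ |s - l * r n| := by
      have := Metric.infDist_le_dist_of_mem (x := l * r n) hsS
      rwa [Real.dist_eq, abs_sub_comm] at this
    have hnn : 0 ≤ Metric.infDist (l * r n) S / r n :=
      div_nonneg Metric.infDist_nonneg (hr n).le
    rw [Real.norm_eq_abs, abs_of_nonneg hnn, div_lt_iff₀ (hr n)]
    have hb : 2 * ε' * (l * r n) ≤ ε * r n := by
      nlinarith [mul_le_mul_of_nonneg_right h4 (hr n).le, (hr n).le, hε.le, hε'pos.le]
    linarith
  -- 1/(n+1)/r n tends to zero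
  have honer : Tendsto (fun n : ℕ => (1:ℝ)/(n+1) / r n) atTop (𝓝 0) := by
    refine squeeze_zero (fun n => div_nonneg (by positivity) (hr n).le)
      (fun n => ?_) hrt.inv_tendsto_atTop
    have h1 : (1:ℝ)/(n+1) ≤ 1 := by
      rw [div_le_one (by positivity)]
      linarith [Nat.cast_nonneg (α := ℝ) n]
    rw [Pi.inv_apply, ← one_div]
    gcongr
    exact (hr n).le
  refine ⟨x, ?_⟩
  have hbound : ∀ n, |dist (x n) p / r n - l| ≤
      Metric.infDist (l * r n) S / r n + 1/(n+1) / r n := by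
    intro n
    have hrn := hr n
    have heq : dist (x n) p / r n - l = (dist (x n) p - l * r n) / r n := by
      field_simp
    rw [heq, abs_div, abs_of_pos hrn, ← add_div]
    gcongr
    exact (hx n).le
  have hg : Tendsto (fun n => Metric.infDist (l * r n) S / r n + 1/(n+1) / r n)
      atTop (𝓝 0) := by
    simpa using hinf.add honer
  have habs : Tendsto (fun n => |dist (x n) p / r n - l|) atTop (𝓝 0) :=
    squeeze_zero (fun n => abs_nonneg _) hbound hg
  have hsub : Tendsto (fun n => dist (x n) p / r n - l) atTop (𝓝 0) :=
    (tendsto_zero_iff_abs_tendsto_zero _).mpr habs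
  simpa using hsub.add_const l

lemma converse_dir {X : Type*} [MetricSpace X] (p : X)
    (hX : ∀ C : ℝ, ∃ x : X, C < dist x p)
    (heq : ∀ r₁ r₂ : ℕ → ℝ, (∀ n, 0 < r₁ n) → Tendsto r₁ atTop atTop →
      (∀ n, 0 < r₂ n) → Tendsto r₂ atTop atTop →
      {l : ℝ | ∃ x : ℕ → X, Tendsto (fun n => dist (x n) p / r₁ n) atTop (𝓝 l)} =
        {l : ℝ | ∃ x : ℕ → X, Tendsto (fun n => dist (x n) p / r₂ n) atTop (𝓝 l)}) :
    porosityAtInfty {t : ℝ | ∃ x : X, dist x p = t} = 0 := by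
  set S := {t : ℝ | ∃ x : X, dist x p = t} with hSdef
  show Filter.limsup (fun h => gapLen S h / h) atTop = 0
  set c := Filter.limsup (fun h => gapLen S h / h) atTop with hcdef
  by_contra hne
  have hge : 0 ≤ c := by
    refine le_limsup_of_frequently_le ?_ (gapLen_div_bdd S)
    refine Eventually.frequently ?_
    filter_upwards [eventually_ge_atTop (1:ℝ)] with h hh
    exact div_nonneg (gapLen_nonneg (by linarith)) (by linarith)
  have hc : 0 < c := lt_of_le_of_ne hge (Ne.symm hne)
  have hcob : IsCoboundedUnder (· ≤ ·) (atTop : Filter ℝ) (fun h => gapLen S h / h) := by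
    refine IsBoundedUnder.isCoboundedUnder_le (isBoundedUnder_of_eventually_ge (a := 0) ?_)
    filter_upwards [eventually_ge_atTop (1:ℝ)] with h hh
    exact div_nonneg (gapLen_nonneg (by linarith)) (by linarith)
  have hfreq : ∃ᶠ h in (atTop : Filter ℝ), c/2 < gapLen S h / h :=
    frequently_lt_of_lt_limsup hcob (by linarith)
  have hsel : ∀ n : ℕ, ∃ h : ℝ, h ≥ (n:ℝ)+1 ∧ c/2 < gapLen S h / h :=
    fun n => frequently_atTop.mp hfreq ((n:ℝ)+1)
  choose H hH1 hH2 using hsel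
  have hHpos : ∀ n, 0 < H n := fun n => by
    have := hH1 n; have : ((n:ℝ)+1) ≤ H n := this
    have : (0:ℝ) ≤ n := Nat.cast_nonneg n
    linarith [hH1 n]
  have hgap : ∀ n : ℕ, ∃ a b : ℝ, 0 ≤ a ∧ a ≤ b ∧ b ≤ H n ∧ Set.Ioo a b ∩ S = ∅ ∧
      c/2 * H n < b - a := by
    intro n
    have hlt : c/2 * H n < gapLen S (H n) :=
      (lt_div_iff₀ (hHpos n)).mp (hH2 n)
    obtain ⟨L, hL, hLlt⟩ := exists_lt_of_lt_csSup ⟨0, zero_mem_gapSet (hHpos n).le⟩ hlt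
    obtain ⟨a, b, ha, hab, hbh, hempty, rfl⟩ := hL
    exact ⟨a, b, ha, hab, hbh, hempty, hLlt⟩
  choose a b ha hab hbH hempty hlen using hgap
  have hbpos : ∀ n, 0 < b n := by
    intro n
    nlinarith [hlen n, ha n, hHpos n, hc]
  set m := fun n => (a n + b n) / 2 with hmdef
  have hmpos : ∀ n, 0 < m n := fun n => by
    have := ha n; have := hbpos n; simp only [hmdef]; positivity
  have hmtop : Tendsto m atTop atTop := by
    refine tendsto_atTop_mono (f := fun n : ℕ => c/4 * ((n:ℝ)+1)) (fun n => ?_) ?_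
    · have h1 : c/2 * ((n:ℝ)+1) ≤ c/2 * H n :=
        mul_le_mul_of_nonneg_left (hH1 n) (by linarith)
      have := hlen n; have := ha n
      simp only [hmdef]
      nlinarith
    · have h2 : Tendsto (fun n : ℕ => (n:ℝ)+1) atTop atTop :=
        tendsto_atTop_add_const_right _ 1 tendsto_natCast_atTop_atTop
      exact h2.const_mul_atTop (by linarith)
  -- second scaling sequence
  have hy : ∀ n : ℕ, ∃ x : X, (n:ℝ) < dist x p := fun n => hX n
  choose y hyd using hy
  set r₂ := fun n => dist (y n) p with hr₂def
  have hr₂pos : ∀ n, 0 < r₂ n := fun n => lt_of_le_of_lt (Nat.cast_nonneg n) (hyd n)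
  have hr₂top : Tendsto r₂ atTop atTop :=
    tendsto_atTop_mono (fun n => (hyd n).le) tendsto_natCast_atTop_atTop
  have hsets := heq m r₂ hmpos hmtop hr₂pos hr₂top
  have h1mem : (1:ℝ) ∈ {l : ℝ | ∃ x : ℕ → X, Tendsto (fun n => dist (x n) p / r₂ n) atTop (𝓝 l)} := by
    refine ⟨y, ?_⟩
    have : (fun n => dist (y n) p / r₂ n) = fun _ => (1:ℝ) := by
      funext n; exact div_self (hr₂pos n).ne'
    rw [this]; exact tendsto_const_nhds
  rw [← hsets] at h1mem
  obtain ⟨x, hx⟩ := h1mem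
  -- contradiction
  rw [Metric.tendsto_atTop] at hx
  obtain ⟨N, hN⟩ := hx (c/4) (by linarith)
  have hdist := hN N le_rfl
  rw [Real.dist_eq] at hdist
  set s := dist (x N) p with hsdef2
  have hsS : s ∈ S := ⟨x N, rfl⟩
  have hnot : s ∉ Set.Ioo (a N) (b N) := by
    intro hmem
    have : s ∈ Set.Ioo (a N) (b N) ∩ S := ⟨hmem, hsS⟩
    rw [hempty N] at this
    exact this
  have hkey : (b N - a N)/2 ≤ |s - m N| := by
    rw [Set.mem_Ioo, not_and_or, not_lt, not_lt] at hnot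
    rcases hnot with h | h
    · rw [le_abs]; right; simp only [hmdef]; linarith
    · rw [le_abs]; left; simp only [hmdef]; linarith
  have habs : |s / m N - 1| = |s - m N| / m N := by
    have heq2 : s / m N - 1 = (s - m N) / m N :=
      div_sub_one (hmpos N).ne'
    rw [heq2, abs_div, abs_of_pos (hmpos N)]
  rw [habs, div_lt_iff₀ (hmpos N)] at hdist
  have h6 : m N ≤ b N := by
    show (a N + b N) / 2 ≤ b N
    linarith [hab N]
  have h7 : c/2 * b N ≤ c/2 * H N := mul_le_mul_of_nonneg_left (hbH N) (by linarith)
  have h8 : c/4 * m N ≤ c/4 * b N :=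
    mul_le_mul_of_nonneg_left h6 (by linarith)
  nlinarith [hkey, hdist, hlen N, h7, h8, hc, ha N, hab N]

theorem nonporous_iff_distance_sets_eq {X : Type*} [MetricSpace X] (p : X)
    (hX : ∀ C : ℝ, ∃ x : X, C < dist x p) :
    porosityAtInfty {t : ℝ | ∃ x : X, dist x p = t} = 0 ↔
    ∀ r₁ r₂ : ℕ → ℝ, (∀ n, 0 < r₁ n) → Tendsto r₁ atTop atTop →
      (∀ n, 0 < r₂ n) → Tendsto r₂ atTop atTop →
      {l : ℝ | ∃ x : ℕ → X, Tendsto (fun n => dist (x n) p / r₁ n) atTop (𝓝 l)} =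
        {l : ℝ | ∃ x : ℕ → X, Tendsto (fun n => dist (x n) p / r₂ n) atTop (𝓝 l)} := by
  constructor
  · intro hpor r₁ r₂ h1p h1t h2p h2t
    have key : ∀ (r : ℕ → ℝ), (∀ n, 0 < r n) → Tendsto r atTop atTop →
        {l : ℝ | ∃ x : ℕ → X, Tendsto (fun n => dist (x n) p / r n) atTop (𝓝 l)}
          = Set.Ici 0 := by
      intro r hr hrt
      ext l
      simp only [Set.mem_setOf_eq, Set.mem_Ici]
      constructor
      · rintro ⟨x, hx⟩
        exact ge_of_tendsto' hx (fun n => div_nonneg dist_nonneg (hr n).le)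
      · intro hl
        rcases eq_or_lt_of_le hl with h0 | h0
        · refine ⟨fun _ => p, ?_⟩
          simp only [dist_self, zero_div]
          rw [← h0]
          exact tendsto_const_nhds
        · exact approx_tendsto p hpor h0 hr hrt
    rw [key r₁ h1p h1t, key r₂ h2p h2t]
  · exact converse_dir p hX
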